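/- Let m ≥ 4 and let p_{l,j} ∈ ℂ be given for integers 4 ≤ l and 0 ≤ j with l + j ≤ m. Define P(ζ) := Σ p_{l,j} ζ^l (conj ζ)^j for ζ ∈ ℂ, and the polynomial q(ζ) := Σ p_{l,j} ζ^{m+l−j}. Assume P(ζ) ≠ 0 for every ζ with |ζ| = 1. Then the winding number about 0 of the loop t ↦ P(e^{it}), t ∈ [0,2π], equals n − m, where n is the number of zeros of q in the open unit disk {|ζ| < 1} counted with multiplicity. -/

import Mathlib

/-! On the unit circle `conj ζ = ζ⁻¹`, so `q ζ = ζ ^ m * P ζ` there, and the loop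
`t ↦ P (e^{it})` is the unit circle pushed forward by the meromorphic function `q z / z ^ m`.
Its winding number is `(2πi)⁻¹ ∮ (q'/q - m/z) dz`: the zeros of `q` inside the disk minus the
pole of order `m` at `0`. For a polynomial this argument principle is elementary, since
`q'/q = ∑ 1/(z - r)` over the roots `r` of `q`, and `∮ 1/(z - r)` is `2πi` or `0` according
as `r` lies inside or outside the circle. -/

noncomputable section

open Complex

/-- The winding number about `0` of the loop `γ : [0, 2π] → ℂ ∖ {0}`:
`W(γ) = (1/(2πi)) ∫₀^{2π} γ'(t)/γ(t) dt`. -/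
def winding (γ : ℝ → ℂ) : ℂ :=
  (1 / (2 * (Real.pi : ℂ) * Complex.I)) * ∫ t in (0 : ℝ)..(2 * Real.pi), deriv γ t / γ t

open Polynomial Metric Real Set

theorem winding_comp_circleMap {f : ℂ → ℂ} {c : ℂ} {R : ℝ} (hR : 0 ≤ R)
    (hf : ∀ z ∈ sphere c R, DifferentiableAt ℂ f z) :
    winding (f ∘ circleMap c R) = (2 * π * I)⁻¹ * ∮ z in C(c, R), logDeriv f z := by
  rw [winding, one_div, circleIntegral]
  congr 1
  refine intervalIntegral.integral_congr fun θ _ => ?_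
  have hθ := circleMap_mem_sphere c hR θ
  rw [((hf _ hθ).hasDerivAt.comp θ (hasDerivAt_circleMap c R θ)).deriv, smul_eq_mul,
    logDeriv_apply, Function.comp_apply, deriv_circleMap]
  ring

theorem continuousOn_sub_inv {s : Set ℂ} {w : ℂ} (hw : w ∉ s) :
    ContinuousOn (fun z => (z - w)⁻¹) s :=
  (continuousOn_id.sub continuousOn_const).inv₀ fun _ hz =>
    sub_ne_zero.2 (ne_of_mem_of_not_mem hz hw)

theorem circleIntegral_sub_inv_of_notMem_closedBall {c w : ℂ} {R : ℝ} (hR : 0 ≤ R)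
    (hw : w ∉ closedBall c R) : ∮ z in C(c, R), (z - w)⁻¹ = 0 := by
  have hd : DifferentiableOn ℂ (fun z => (z - w)⁻¹) (closedBall c R) := fun z hz =>
    ((differentiableAt_id.sub_const w).inv
      (sub_ne_zero.2 (ne_of_mem_of_not_mem hz hw))).differentiableWithinAt
  exact (hd.mono closure_ball_subset_closedBall).diffContOnCl.circleIntegral_eq_zero hR

theorem circleIntegral_sub_inv_of_notMem_sphere {c w : ℂ} {R : ℝ} (hR : 0 ≤ R)
    (hw : w ∉ sphere c R) :
    ∮ z in C(c, R), (z - w)⁻¹ = if dist w c < R then 2 * π * I else 0 := by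
  split_ifs with hball
  · exact circleIntegral.integral_sub_inv_of_mem_ball hball
  · refine circleIntegral_sub_inv_of_notMem_closedBall hR fun hcl => ?_
    rw [← ball_union_sphere] at hcl
    exact hcl.elim hball hw

theorem circleIntegral_multiset_sum_sub_inv {c : ℂ} {R : ℝ} (hR : 0 ≤ R) (s : Multiset ℂ)
    (hs : ∀ w ∈ s, w ∉ sphere c R) :
    ∮ z in C(c, R), (s.map fun w => (z - w)⁻¹).sum =
      2 * π * I * Multiset.card (s.filter (dist · c < R)) := by
  induction s using Multiset.induction_on with
  | empty => simp [circleIntegral]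
  | cons a s ih =>
    rw [Multiset.forall_mem_cons] at hs
    simp only [Multiset.map_cons, Multiset.sum_cons]
    have hs_int : CircleIntegrable (fun z => (s.map fun w => (z - w)⁻¹).sum) c R :=
      (continuousOn_multiset_sum s fun w hw => continuousOn_sub_inv (hs.2 w hw)).circleIntegrable hR
    rw [circleIntegral.integral_add ((continuousOn_sub_inv hs.1).circleIntegrable hR) hs_int,
      ih hs.2, circleIntegral_sub_inv_of_notMem_sphere hR hs.1, Multiset.filter_cons]
    split_ifs
    · simp only [Multiset.singleton_add, Multiset.card_cons]
      push_cast
      ring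
    · simp

theorem circleIntegral_derivative_div_eval {c : ℂ} {R : ℝ} (hR : 0 ≤ R) (q : ℂ[X])
    (hq : ∀ z ∈ sphere c R, q.eval z ≠ 0) :
    ∮ z in C(c, R), q.derivative.eval z / q.eval z =
      2 * π * I * Multiset.card (q.roots.filter (dist · c < R)) := by
  have hroots : ∀ w ∈ q.roots, w ∉ sphere c R := fun w hw hsphere =>
    hq w hsphere (isRoot_of_mem_roots hw)
  rw [← circleIntegral_multiset_sum_sub_inv hR q.roots hroots]
  refine circleIntegral.integral_congr hR fun z hz => ?_
  simp only [← one_div]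
  exact (IsAlgClosed.splits q).eval_derivative_div_eval_of_ne_zero (hq z hz)

theorem circleIntegral_logDeriv_eval_div_pow {R : ℝ} (hR : 0 < R) (q : ℂ[X]) (m : ℕ)
    (hq : ∀ z ∈ sphere (0 : ℂ) R, q.eval z ≠ 0) :
    ∮ z in C(0, R), logDeriv (fun z => q.eval z / z ^ m) z =
      2 * π * I * (Multiset.card (q.roots.filter (‖·‖ < R)) - m) := by
  have hpole : (0 : ℂ) ∉ sphere 0 R := by simp [hR.ne]
  -- `z - 0` rather than `z`, to match `integral_sub_inv_of_mem_ball` with the pole `0`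
  have hlog : EqOn (logDeriv fun z => q.eval z / z ^ m)
      (fun z => q.derivative.eval z / q.eval z - m * (z - 0)⁻¹) (sphere 0 R) := fun z hz => by
    have hz0 : z ≠ 0 := ne_of_mem_of_not_mem hz hpole
    rw [logDeriv_div (f := fun z => q.eval z) (g := (· ^ m)) z (hq z hz) (pow_ne_zero m hz0)
      q.differentiableAt (by fun_prop), logDeriv_pow, logDeriv_apply, Polynomial.deriv]
    simp only [sub_zero, div_eq_mul_inv (m : ℂ)]
  have hq_int : CircleIntegrable (fun z => q.derivative.eval z / q.eval z) 0 R :=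
    (ContinuousOn.div₀ q.derivative.continuousOn q.continuousOn hq).circleIntegrable hR.le
  have hpole_int : CircleIntegrable (fun z => m * (z - 0)⁻¹) 0 R :=
    (ContinuousOn.fun_mul continuousOn_const (continuousOn_sub_inv hpole)).circleIntegrable
      hR.le
  rw [circleIntegral.integral_congr hR.le hlog, circleIntegral.integral_sub hq_int hpole_int,
    circleIntegral.integral_const_mul, circleIntegral_derivative_div_eval hR.le q hq,
    circleIntegral.integral_sub_inv_of_mem_ball (by simpa using hR)]
  simp only [dist_zero_right]
  ring

theorem eval_sum_eq_pow_mul_of_norm_eq_one (m : ℕ) (s : Finset ℕ) (p : ℕ → ℕ → ℂ) {ζ : ℂ}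
    (hζ : ‖ζ‖ = 1) :
    (∑ l ∈ s, ∑ j ∈ Finset.range (m - l + 1), C (p l j) * X ^ (m + l - j)).eval ζ =
      ζ ^ m * ∑ l ∈ s, ∑ j ∈ Finset.range (m - l + 1),
        p l j * ζ ^ l * starRingEnd ℂ ζ ^ j := by
  have hζ0 : ζ ≠ 0 := norm_ne_zero_iff.1 (by simp [hζ])
  simp only [eval_finsetSum, Finset.mul_sum, eval_mul, eval_C, eval_pow, eval_X,
    ← inv_eq_conj hζ]
  refine Finset.sum_congr rfl fun l _ => Finset.sum_congr rfl fun j hj => ?_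
  have hjl : j ≤ m + l := by
    have := Finset.mem_range.1 hj
    omega
  rw [pow_sub₀ ζ hζ0 hjl, pow_add, inv_pow]
  ring

theorem winding_eq_zeros_sub_degree_general (m : ℕ) (p : ℕ → ℕ → ℂ)
    (P : ℂ → ℂ)
    (hP : ∀ ζ : ℂ, P ζ = ∑ l ∈ Finset.Icc 4 m, ∑ j ∈ Finset.range (m - l + 1),
      p l j * ζ ^ l * (starRingEnd ℂ ζ) ^ j)
    (q : Polynomial ℂ)
    (hq : q = ∑ l ∈ Finset.Icc 4 m, ∑ j ∈ Finset.range (m - l + 1),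
      Polynomial.C (p l j) * Polynomial.X ^ (m + l - j))
    (hnv : ∀ ζ : ℂ, ‖ζ‖ = 1 → P ζ ≠ 0) :
    winding (fun t : ℝ => P (Complex.exp (Complex.I * (t : ℂ)))) =
      ((Multiset.card (q.roots.filter (fun z => ‖z‖ < 1)) : ℂ) - (m : ℂ)) := by
  have hpow : ∀ z ∈ sphere (0 : ℂ) 1, z ^ m ≠ 0 := fun z hz =>
    pow_ne_zero m (ne_zero_of_mem_unit_sphere ⟨z, hz⟩)
  have hqP : ∀ z ∈ sphere (0 : ℂ) 1, q.eval z = z ^ m * P z := fun z hz => by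
    rw [hq, hP, eval_sum_eq_pow_mul_of_norm_eq_one m _ p (by simpa using hz)]
  have hq_ne : ∀ z ∈ sphere (0 : ℂ) 1, q.eval z ≠ 0 := fun z hz => by
    rw [hqP z hz]
    exact mul_ne_zero (hpow z hz) (hnv z (by simpa using hz))
  have hloop :
      (fun t : ℝ => P (exp (I * t))) = (fun z => q.eval z / z ^ m) ∘ circleMap 0 1 := by
    funext t
    have ht := circleMap_mem_sphere 0 zero_le_one t
    rw [Function.comp_apply, hqP _ ht, mul_div_cancel_left₀ _ (hpow _ ht)]
    simp [circleMap, mul_comm]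
  rw [hloop, winding_comp_circleMap zero_le_one fun z hz =>
      q.differentiableAt.fun_div (differentiableAt_pow m) (hpow z hz),
    circleIntegral_logDeriv_eval_div_pow one_pos q m hq_ne]
  field_simp

/-- **Lemma 6.8 (argument principle computation)**: let `P(ζ) = Σ p_{l,j} ζ^l ζ̄^j` (sum over
`4 ≤ l`, `0 ≤ j`, `l + j ≤ m`) be nonvanishing on the unit circle and let
`q(ζ) = Σ p_{l,j} ζ^{m+l-j}`. Then the winding number about `0` of `t ↦ P(e^{it})` equals
`n - m`, where `n` is the number of zeros of `q` in the open unit disk counted with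
multiplicity. -/
theorem winding_eq_zeros_sub_degree (m : ℕ) (hm : 4 ≤ m) (p : ℕ → ℕ → ℂ)
    (P : ℂ → ℂ)
    (hP : ∀ ζ : ℂ, P ζ = ∑ l ∈ Finset.Icc 4 m, ∑ j ∈ Finset.range (m - l + 1),
      p l j * ζ ^ l * (starRingEnd ℂ ζ) ^ j)
    (q : Polynomial ℂ)
    (hq : q = ∑ l ∈ Finset.Icc 4 m, ∑ j ∈ Finset.range (m - l + 1),
      Polynomial.C (p l j) * Polynomial.X ^ (m + l - j))
    (hnv : ∀ ζ : ℂ, ‖ζ‖ = 1 → P ζ ≠ 0) :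
    winding (fun t : ℝ => P (Complex.exp (Complex.I * (t : ℂ)))) =
      ((Multiset.card (q.roots.filter (fun z => ‖z‖ < 1)) : ℂ) - (m : ℂ)) :=
  winding_eq_zeros_sub_degree_general m p P hP q hq hnv
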